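/- arXiv:1509.01976 — 3 statements merged into one kernel-verified Lean document; each statement's English description precedes it below -/
import Mathlib

section
/- Let A be a GCM and \tilde{g}(A) the auxiliary Lie algebra. Let i^± denote the ideal of the free Lie algebra \tilde{n}^± generated by the Serre elements x_{ij}^+ = (ad e_i)^{1+|a_{ij}|} e_j (resp. x_{ij}^- = (ad f_i)^{1+|a_{ij}|} f_j) for i ≠ j. Then i^+ and i^- are ideals of the whole Lie algebra \tilde{g}(A), and the ideal of \tilde{g}(A) generated by all x_{ij}^± decomposes as the direct sum i^+ ⊕ i^-. -/
/-- A generalised Cartan matrix. -/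
def IsGCM {I : Type*} (a : I → I → ℤ) : Prop :=
  (∀ i, a i i = 2) ∧ (∀ i j, i ≠ j → a i j ≤ 0) ∧ (∀ i j, a i j = 0 ↔ a j i = 0)

/-- The orbit of a set `S` under iterated bracketing by elements of `E`. -/
inductive AdOrb {L : Type*} [LieRing L] (E S : Set L) : L → Prop
  | base {x : L} : x ∈ S → AdOrb E S x
  | step {g x : L} : g ∈ E → AdOrb E S x → AdOrb E S ⁅g, x⁆

theorem key {I : Type*} (a : I → I → ℤ) (hA : IsGCM a)
    {L : Type*} [LieRing L] [LieAlgebra ℂ L]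
    (e f h : I → L)
    (hef : ∀ i, ⁅e i, f i⁆ = -(h i))
    (hef' : ∀ i j, i ≠ j → ⁅e i, f j⁆ = 0)
    (hhe : ∀ i j, ⁅h i, e j⁆ = a i j • e j)
    (hhf : ∀ i j, ⁅h i, f j⁆ = -(a i j • f j))
    (hgen : LieSubalgebra.lieSpan ℂ L (Set.range e ∪ Set.range f ∪ Set.range h) = ⊤) :
    ∀ x ∈ LieSubmodule.lieSpan ℂ L
      {x | ∃ i j, i ≠ j ∧ x = ((LieAlgebra.ad ℂ L (e i)) ^ (1 + (a i j).natAbs)) (e j)},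
      x ∈ LieSubalgebra.lieSpan ℂ L (Set.range e) := by
  set S : Set L :=
    {x | ∃ i j, i ≠ j ∧ x = ((LieAlgebra.ad ℂ L (e i)) ^ (1 + (a i j).natAbs)) (e j)} with hS
  set nP : LieSubalgebra ℂ L := LieSubalgebra.lieSpan ℂ L (Set.range e) with hnP
  have adpow : ∀ (x y : L) (m : ℕ),
      ((LieAlgebra.ad ℂ L x) ^ (m+1)) y = ⁅x, ((LieAlgebra.ad ℂ L x) ^ m) y⁆ := by
    intro x y m; rw [pow_succ', Module.End.mul_apply, LieAlgebra.ad_apply]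
  have adpow' : ∀ (x y : L) (m : ℕ),
      ((LieAlgebra.ad ℂ L x) ^ (m+1)) y = ((LieAlgebra.ad ℂ L x) ^ m) ⁅x, y⁆ := by
    intro x y m; rw [pow_succ, Module.End.mul_apply, LieAlgebra.ad_apply]
  have hEnP : ∀ i, e i ∈ nP := fun i => LieSubalgebra.subset_lieSpan ⟨i, rfl⟩
  have hpow : ∀ (i : I) (m : ℕ) (y : L), y ∈ nP → ((LieAlgebra.ad ℂ L (e i)) ^ m) y ∈ nP := by
    intro i m
    induction m with
    | zero => simpa using fun y hy => hy
    | succ m ih => intro y hy; rw [adpow]; exact nP.lie_mem (hEnP i) (ih y hy)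
  have hSnP : S ⊆ nP := by
    rintro x ⟨i, j, hij, rfl⟩
    exact hpow i _ (e j) (hEnP j)
  set N : Submodule ℂ L := Submodule.span ℂ {x | AdOrb (Set.range e) S x} with hN
  have hOrbN : ∀ x, AdOrb (Set.range e) S x → x ∈ N := fun x hx => Submodule.subset_span hx
  have hOrbnP : ∀ x, AdOrb (Set.range e) S x → x ∈ nP := by
    intro x hx
    induction hx with
    | base hx => exact hSnP hx
    | step hg _ ih => obtain ⟨i, rfl⟩ := hg; exact nP.lie_mem (hEnP i) ih
  have hNnP : ∀ x ∈ N, x ∈ nP := by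
    intro x hx
    exact Submodule.span_le.mpr (fun y hy => hOrbnP y hy) hx
  have hMap : ∀ z : L, (∀ x, AdOrb (Set.range e) S x → ⁅z, x⁆ ∈ N) → ∀ u ∈ N, ⁅z, u⁆ ∈ N := by
    intro z hz u hu
    have h1 : N ≤ Submodule.comap (LieAlgebra.ad ℂ L z) N := by
      rw [hN, Submodule.span_le]
      intro x hx
      simpa [LieAlgebra.ad_apply] using hz x hx
    simpa [LieAlgebra.ad_apply] using h1 hu
  have hE : ∀ (i : I), ∀ u ∈ N, ⁅e i, u⁆ ∈ N :=
    fun i => hMap (e i) (fun x hx => hOrbN _ (AdOrb.step ⟨i, rfl⟩ hx))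
  have hz : ∀ (z : ℤ) (x : L), x ∈ N → z • x ∈ N := fun z x hx => by
    rw [← Int.cast_smul_eq_zsmul ℂ]; exact N.smul_mem _ hx
  -- eigenvalue computation
  have hEig : ∀ (k i j : I) (m : ℕ),
      ⁅h k, ((LieAlgebra.ad ℂ L (e i)) ^ m) (e j)⁆
        = (((m : ℤ) * a k i + a k j)) • ((LieAlgebra.ad ℂ L (e i)) ^ m) (e j) := by
    intro k i j m
    induction m with
    | zero => simpa using hhe k j
    | succ m ih =>
      rw [adpow, leibniz_lie, hhe, smul_lie, ih, lie_smul, ← adpow, ← add_smul]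
      congr 1
      push_cast
      ring
  have hSerreH : ∀ (k : I) (x : L), x ∈ S → ⁅h k, x⁆ ∈ N := by
    rintro k _ ⟨i, j, hij, rfl⟩
    rw [hEig]
    exact hz _ _ (hOrbN _ (AdOrb.base ⟨i, j, hij, rfl⟩))
  have hAdH : ∀ (k : I) (x : L), AdOrb (Set.range e) S x → ⁅h k, x⁆ ∈ N := by
    intro k x hx
    induction hx with
    | base hx => exact hSerreH k _ hx
    | step hg hx ih =>
      obtain ⟨i, rfl⟩ := hg
      rw [leibniz_lie, hhe, smul_lie]
      exact N.add_mem (hz _ _ (hOrbN _ (AdOrb.step ⟨i, rfl⟩ hx))) (hE i _ ih)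
  -- f commutes with ad-powers when it commutes with the base
  have hcomm : ∀ (z : L) (i : I), ⁅z, e i⁆ = 0 → ∀ (m : ℕ) (y : L),
      ⁅z, ((LieAlgebra.ad ℂ L (e i)) ^ m) y⁆ = ((LieAlgebra.ad ℂ L (e i)) ^ m) ⁅z, y⁆ := by
    intro z i h0 m
    induction m with
    | zero => simp
    | succ m ih =>
      intro y
      rw [adpow, leibniz_lie, h0, zero_lie, zero_add, ih, ← adpow]
  -- the main Serre computation: ⁅f k, x⁆ = 0 for Serre elements x
  have hSerreF : ∀ (k : I) (x : L), x ∈ S → ⁅f k, x⁆ = 0 := by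
    rintro k _ ⟨i, j, hij, rfl⟩
    have hfe : ∀ p q : I, p ≠ q → ⁅f q, e p⁆ = 0 := fun p q hpq => by
      rw [← lie_skew, hef' p q hpq, neg_zero]
    by_cases hki : k = i
    · subst hki
      have hfei : ⁅f k, e k⁆ = h k := by rw [← lie_skew, hef, neg_neg]
      have main : ∀ m : ℕ, ⁅f k, ((LieAlgebra.ad ℂ L (e k)) ^ (m+1)) (e j)⁆
          = (((m : ℤ) + 1) * ((m : ℤ) + a k j)) • ((LieAlgebra.ad ℂ L (e k)) ^ m) (e j) := by
        intro m
        induction m with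
        | zero =>
          rw [adpow, pow_zero, Module.End.one_apply, leibniz_lie, hfei,
            hfe j k (Ne.symm hij), lie_zero, add_zero, hhe]
          norm_num
        | succ m ih =>
          rw [adpow, leibniz_lie, hfei, hEig, ih, lie_smul, ← adpow, ← add_smul]
          congr 1
          rw [hA.1 k]
          push_cast
          ring
      have hle : a k j ≤ 0 := hA.2.1 k j hij
      have habs : ((a k j).natAbs : ℤ) = -(a k j) := Int.ofNat_natAbs_of_nonpos hle
      rw [add_comm 1, main]
      rw [habs]
      simp
    · by_cases hkj : k = j
      · subst hkj
        rw [hcomm (f k) i (hfe i k (fun hh => hki hh.symm))]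
        have hfek : ⁅f k, e k⁆ = h k := by rw [← lie_skew, hef, neg_neg]
        rw [hfek]
        by_cases h0 : a i k = 0
        · have h0' : a k i = 0 := (hA.2.2 i k).mp h0
          rw [h0]
          simp only [Int.natAbs_zero]
          rw [pow_one, LieAlgebra.ad_apply, ← lie_skew, hhe, h0']
          simp
        · obtain ⟨n, hn⟩ : ∃ n, (a i k).natAbs = n + 1 :=
            Nat.exists_eq_succ_of_ne_zero (Int.natAbs_ne_zero.mpr h0)
          rw [hn, show 1 + (n + 1) = (1 + n) + 1 from by ring, adpow']
          have : ⁅e i, h k⁆ = -(a k i • e i) := by rw [← lie_skew, hhe]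
          rw [this, map_neg, map_zsmul, add_comm 1 n, adpow', lie_self, map_zero]
          simp
      · rw [hcomm (f k) i (hfe i k (fun hh => hki hh.symm)), hfe j k (Ne.symm hkj), map_zero]
  have hAdF : ∀ (k : I) (x : L), AdOrb (Set.range e) S x → ⁅f k, x⁆ ∈ N := by
    intro k x hx
    induction hx with
    | base hx => rw [hSerreF k _ hx]; exact N.zero_mem
    | step hg hx ih =>
      obtain ⟨i, rfl⟩ := hg
      rw [leibniz_lie]
      refine N.add_mem ?_ (hE i _ ih)
      by_cases hki : k = i
      · subst hki
        have : ⁅f k, e k⁆ = h k := by rw [← lie_skew, hef, neg_neg]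
        rw [this]
        exact hAdH k _ hx
      · have : ⁅f k, e i⁆ = 0 := by rw [← lie_skew, hef' i k (fun hh => hki hh.symm), neg_zero]
        rw [this, zero_lie]
        exact N.zero_mem
  -- the stabilizer subalgebra
  set Q : LieSubalgebra ℂ L :=
    { carrier := {z : L | ∀ u ∈ N, ⁅z, u⁆ ∈ N}
      add_mem' := fun hx hy u hu => by rw [add_lie]; exact N.add_mem (hx u hu) (hy u hu)
      zero_mem' := fun u hu => by rw [zero_lie]; exact N.zero_mem
      smul_mem' := fun c z hz u hu => by rw [smul_lie]; exact N.smul_mem c (hz u hu)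
      lie_mem' := fun {x y} hx hy u hu => by
        rw [lie_lie]; exact N.sub_mem (hx _ (hy u hu)) (hy _ (hx u hu)) } with hQ
  have hQtop : ∀ z : L, ∀ u ∈ N, ⁅z, u⁆ ∈ N := by
    have hle : LieSubalgebra.lieSpan ℂ L (Set.range e ∪ Set.range f ∪ Set.range h) ≤ Q := by
      rw [LieSubalgebra.lieSpan_le]
      rintro z ((⟨i, rfl⟩ | ⟨i, rfl⟩) | ⟨i, rfl⟩)
      · exact hE i
      · exact hMap (f i) (hAdF i)
      · exact hMap (h i) (hAdH i)
    intro z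
    exact hle (hgen ▸ trivial : z ∈ LieSubalgebra.lieSpan ℂ L _)
  set NI : LieIdeal ℂ L :=
    { toSubmodule := N
      lie_mem := fun {x m} hm => hQtop x m hm } with hNI
  intro x hx
  have hle : LieSubmodule.lieSpan ℂ L S ≤ NI :=
    (LieSubmodule.lieSpan_le).mpr (fun y hy => hOrbN y (AdOrb.base hy))
  exact hNnP x (hle hx)
/-- Let `A` be a GCM and let `L = 𝔤̃(A)` be the auxiliary Lie algebra: it is
generated by `e_i, f_i` and the Cartan subalgebra (here spanned by the coroots
`h_i = α_i^∨`), with the relations `[e_i, f_j] = −δ_{ij} α_i^∨`, `[h, h'] = 0`,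
`[h_i, e_j] = a_{ij} e_j`, `[h_i, f_j] = −a_{ij} f_j`, and with triangular
decomposition `L = 𝔫̃⁻ ⊕ 𝔥 ⊕ 𝔫̃⁺`, where `𝔫̃⁺` (resp. `𝔫̃⁻`) is the (free)
subalgebra generated by the `e_i` (resp. `f_i`).  Let `i⁺` (resp. `i⁻`) be the
Lie ideal generated by the Serre elements `x⁺_{ij} = (ad e_i)^{1+|a_{ij}|} e_j`
(resp. `x⁻_{ij} = (ad f_i)^{1+|a_{ij}|} f_j`), `i ≠ j`.  Then `i⁺ ⊆ 𝔫̃⁺` and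
`i⁻ ⊆ 𝔫̃⁻` (so `i^±` is simultaneously an ideal of `𝔫̃^±` and of `L`), and the
ideal of `L` generated by all the `x^±_{ij}` decomposes as the direct sum
`i⁺ ⊕ i⁻`. -/
theorem stmt1 {I : Type*} (a : I → I → ℤ) (hA : IsGCM a)
    {L : Type*} [LieRing L] [LieAlgebra ℂ L]
    (e f h : I → L)
    (hef : ∀ i, ⁅e i, f i⁆ = -(h i))
    (hef' : ∀ i j, i ≠ j → ⁅e i, f j⁆ = 0)
    (hhh : ∀ i j, ⁅h i, h j⁆ = 0)
    (hhe : ∀ i j, ⁅h i, e j⁆ = a i j • e j)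
    (hhf : ∀ i j, ⁅h i, f j⁆ = -(a i j • f j))
    (hgen : LieSubalgebra.lieSpan ℂ L (Set.range e ∪ Set.range f ∪ Set.range h) = ⊤)
    -- triangular decomposition `L = 𝔫̃⁻ ⊕ 𝔥 ⊕ 𝔫̃⁺` (as vector spaces)
    (nP nM : LieSubalgebra ℂ L) (H : Submodule ℂ L)
    (hnP : nP = LieSubalgebra.lieSpan ℂ L (Set.range e))
    (hnM : nM = LieSubalgebra.lieSpan ℂ L (Set.range f))
    (hH : H = Submodule.span ℂ (Set.range h))
    (hsup : nP.toSubmodule ⊔ nM.toSubmodule ⊔ H = ⊤)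
    (hindP : nP.toSubmodule ⊓ (nM.toSubmodule ⊔ H) = ⊥)
    (hindM : nM.toSubmodule ⊓ (nP.toSubmodule ⊔ H) = ⊥)
    (hindH : H ⊓ (nP.toSubmodule ⊔ nM.toSubmodule) = ⊥)
    -- the Serre elements and the ideals they generate
    (Iplus Iminus Itot : LieIdeal ℂ L)
    (hIp : Iplus = LieSubmodule.lieSpan ℂ L
      {x | ∃ i j, i ≠ j ∧ x = ((LieAlgebra.ad ℂ L (e i)) ^ (1 + (a i j).natAbs)) (e j)})
    (hIm : Iminus = LieSubmodule.lieSpan ℂ L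
      {x | ∃ i j, i ≠ j ∧ x = ((LieAlgebra.ad ℂ L (f i)) ^ (1 + (a i j).natAbs)) (f j)})
    (hIt : Itot = LieSubmodule.lieSpan ℂ L
      ({x | ∃ i j, i ≠ j ∧ x = ((LieAlgebra.ad ℂ L (e i)) ^ (1 + (a i j).natAbs)) (e j)} ∪
       {x | ∃ i j, i ≠ j ∧ x = ((LieAlgebra.ad ℂ L (f i)) ^ (1 + (a i j).natAbs)) (f j)})) :
    ((Iplus : Set L) ⊆ (nP : Set L)) ∧
    ((Iminus : Set L) ⊆ (nM : Set L)) ∧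
    Itot = Iplus ⊔ Iminus ∧
    Iplus ⊓ Iminus = ⊥ := by
  -- swapped data for the minus part
  have hef2 : ∀ i, ⁅f i, e i⁆ = -((fun i => -h i) i) := fun i => by
    rw [← lie_skew, hef, neg_neg]
  have hef2' : ∀ i j, i ≠ j → ⁅f i, e j⁆ = 0 := fun i j hij => by
    rw [← lie_skew, hef' j i (Ne.symm hij), neg_zero]
  have hhe2 : ∀ i j, ⁅(fun i => -h i) i, e j⁆ = -(a i j • e j) := fun i j => by
    simp only [neg_lie, hhe]
  have hhf2 : ∀ i j, ⁅(fun i => -h i) i, f j⁆ = a i j • f j := fun i j => by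
    simp only [neg_lie, hhf, neg_neg]
  have hgen2 : LieSubalgebra.lieSpan ℂ L
      (Set.range f ∪ Set.range e ∪ Set.range (fun i => -h i)) = ⊤ := by
    refine le_antisymm le_top ?_
    rw [← hgen, LieSubalgebra.lieSpan_le]
    rintro z ((⟨i, rfl⟩ | ⟨i, rfl⟩) | ⟨i, rfl⟩)
    · exact LieSubalgebra.subset_lieSpan (Or.inl (Or.inr ⟨i, rfl⟩))
    · exact LieSubalgebra.subset_lieSpan (Or.inl (Or.inl ⟨i, rfl⟩))
    · have : h i = -((fun i => -h i) i) := by simp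
      rw [this]
      exact neg_mem (LieSubalgebra.subset_lieSpan (Or.inr ⟨i, rfl⟩))
  have hA2 : IsGCM a := hA
  have keyP : ∀ x ∈ Iplus, x ∈ nP := by
    intro x hx
    rw [hIp] at hx
    rw [hnP]
    exact key a hA e f h hef hef' hhe hhf hgen x hx
  have keyM : ∀ x ∈ Iminus, x ∈ nM := by
    intro x hx
    rw [hIm] at hx
    rw [hnM]
    exact key a hA2 f e (fun i => -h i) hef2 hef2' hhf2 hhe2 hgen2 x hx
  refine ⟨fun x hx => keyP x hx, fun x hx => keyM x hx, ?_, ?_⟩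
  · rw [hIt, hIp, hIm]
    apply le_antisymm
    · rw [LieSubmodule.lieSpan_le]
      apply Set.union_subset
      · exact fun x hx => le_sup_left (a := LieSubmodule.lieSpan ℂ L _)
          (LieSubmodule.subset_lieSpan hx)
      · exact fun x hx => le_sup_right (a := LieSubmodule.lieSpan ℂ L _)
          (LieSubmodule.subset_lieSpan hx)
    · apply sup_le
      · exact LieSubmodule.lieSpan_mono Set.subset_union_left
      · exact LieSubmodule.lieSpan_mono Set.subset_union_right
  · rw [LieSubmodule.eq_bot_iff]
    intro m hm
    have hm1 : m ∈ Iplus := ((LieSubmodule.mem_inf _ _ _).mp hm).1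
    have hm2 : m ∈ Iminus := ((LieSubmodule.mem_inf _ _ _).mp hm).2
    have h1 : m ∈ nP.toSubmodule := keyP m hm1
    have h2 : m ∈ nM.toSubmodule ⊔ H := Submodule.mem_sup_left (keyM m hm2)
    have : m ∈ nP.toSubmodule ⊓ (nM.toSubmodule ⊔ H) := ⟨h1, h2⟩
    rw [hindP] at this
    exact this
end

section
/- Let A = (a_{ij})_{i,j∈I} be a GCM and B a simply laced cover of A with index set J = {(i,j) : i ∈ I, 1 ≤ j ≤ n_i}. Set α_{(i,·)}^∨ = Σ_{j=1}^{n_i} α_{(i,j)}^∨ in the coroot lattice of B and let s_{(i,·)} = ∏_{j=1}^{n_i} s_{(i,j)} (a product of pairwise commuting simple reflections of W(B)). Then the Z-linear map π̄ : Q^∨(A) → Q^∨(B), α_i^∨ ↦ α_{(i,·)}^∨ is injective and satisfies π̄(s_i(h)) = s_{(i,·)}(π̄(h)) for all i ∈ I and h ∈ Q^∨(A). Consequently, if w = s_{i_1}⋯s_{i_k} is a reduced word in W(A) with k ≥ 1, then w^π := s_{(i_1,·)}⋯s_{(i_k,·)} ∈ W(B) is nontrivial. -/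
namespace Stmt15

/-- A generalised Cartan matrix. -/
def IsGCM {I : Type*} (a : I → I → ℤ) : Prop :=
  (∀ i, a i i = 2) ∧ (∀ i j, i ≠ j → a i j ≤ 0) ∧ (∀ i j, a i j = 0 ↔ a j i = 0)

variable {I : Type*} [DecidableEq I] (n : I → ℕ)

/-- The coroot lattice map `π̄ : Q^∨(A) → Q^∨(B)`, `α_i^∨ ↦ α_{(i,·)}^∨ = Σ_r α_{(i,r)}^∨`. -/
noncomputable def piBar (h : I →₀ ℤ) : (Σ i, Fin (n i)) →₀ ℤ :=
  h.sum fun i c => ∑ r : Fin (n i), Finsupp.single ⟨i, r⟩ c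

/-- Simple reflection of `W(A)` on the coroot lattice `Q^∨(A)`:
`s_i(h) = h − ⟨α_i, h⟩ α_i^∨` where `⟨α_i, α_j^∨⟩ = a_{ji}`. -/
noncomputable def sA (a : I → I → ℤ) (i : I) (h : I →₀ ℤ) : I →₀ ℤ :=
  h - (h.sum fun j c => c * a j i) • Finsupp.single i 1

/-- Simple reflection `s_{(i,r)}` of `W(B)` on the coroot lattice `Q^∨(B)`. -/
noncomputable def sB (B : (Σ i, Fin (n i)) → (Σ i, Fin (n i)) → ℤ)
    (s : Σ i, Fin (n i)) (h : (Σ i, Fin (n i)) →₀ ℤ) : (Σ i, Fin (n i)) →₀ ℤ :=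
  h - (h.sum fun t c => c * B t s) • Finsupp.single s 1

/-- The product `s_{(i,·)} = ∏_{r} s_{(i,r)}` of the pairwise commuting simple
reflections attached to the fibre over `i`. -/
noncomputable def sProd (B : (Σ i, Fin (n i)) → (Σ i, Fin (n i)) → ℤ)
    (i : I) (h : (Σ i, Fin (n i)) →₀ ℤ) : (Σ i, Fin (n i)) →₀ ℤ :=
  (List.finRange (n i)).foldr (fun r x => sB n B ⟨i, r⟩ x) h

lemma fiber_sum_apply (i : I) (c : ℤ) (j : I) (m : Fin (n j)) :
    (∑ r : Fin (n i), Finsupp.single (⟨i, r⟩ : Σ i, Fin (n i)) c) ⟨j, m⟩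
      = if i = j then c else 0 := by
  classical
  rw [Finset.sum_apply']
  by_cases hij : i = j
  · subst hij
    simp [Finsupp.single_apply, Sigma.mk.inj_iff]
  · simp [Finsupp.single_apply, Sigma.mk.inj_iff, hij]

lemma piBar_apply (h : I →₀ ℤ) (j : I) (m : Fin (n j)) :
    piBar n h ⟨j, m⟩ = h j := by
  classical
  rw [piBar, Finsupp.sum_apply]
  simp only [fiber_sum_apply]
  by_cases hj : j ∈ h.support
  · rw [Finsupp.sum_ite_eq' h j fun _ c => c, if_pos hj]
  · rw [Finsupp.sum_ite_eq' h j fun _ c => c, if_neg hj]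
    exact (Finsupp.notMem_support_iff.mp hj).symm

/-- The linear functional `⟨α_s, ·⟩` on `Q^∨(B)`. -/
noncomputable def LB (B : (Σ i, Fin (n i)) → (Σ i, Fin (n i)) → ℤ)
    (s : Σ i, Fin (n i)) : ((Σ i, Fin (n i)) →₀ ℤ) →ₗ[ℤ] ℤ :=
  Finsupp.linearCombination ℤ (fun t => B t s)

lemma LB_apply (B : (Σ i, Fin (n i)) → (Σ i, Fin (n i)) → ℤ)
    (s : Σ i, Fin (n i)) (x : (Σ i, Fin (n i)) →₀ ℤ) :
    LB n B s x = x.sum fun t c => c * B t s := by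
  simp [LB, Finsupp.linearCombination_apply, smul_eq_mul]

lemma sB_eq (B : (Σ i, Fin (n i)) → (Σ i, Fin (n i)) → ℤ)
    (s : Σ i, Fin (n i)) (x : (Σ i, Fin (n i)) →₀ ℤ) :
    sB n B s x = x - Finsupp.single s (LB n B s x) := by
  rw [sB, LB_apply, Finsupp.smul_single', mul_one]

lemma foldr_sB (B : (Σ i, Fin (n i)) → (Σ i, Fin (n i)) → ℤ)
    (hfib : ∀ (i : I) (r r' : Fin (n i)), r ≠ r' → B ⟨i, r⟩ ⟨i, r'⟩ = 0)
    (i : I) (x : (Σ i, Fin (n i)) →₀ ℤ) :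
    ∀ l : List (Fin (n i)), l.Nodup →
      l.foldr (fun r y => sB n B ⟨i, r⟩ y) x
        = x - (l.map fun r =>
            Finsupp.single (⟨i, r⟩ : Σ i, Fin (n i)) (LB n B ⟨i, r⟩ x)).sum
  | [], _ => by simp
  | r :: l, hnd => by
    have hr : r ∉ l := (List.nodup_cons.mp hnd).1
    have ih := foldr_sB B hfib i x l (List.nodup_cons.mp hnd).2
    rw [List.foldr_cons, ih, sB_eq]
    have hzero : LB n B ⟨i, r⟩
        ((l.map fun r' =>
            Finsupp.single (⟨i, r'⟩ : Σ i, Fin (n i)) (LB n B ⟨i, r'⟩ x)).sum) = 0 := by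
      rw [map_list_sum]
      refine List.sum_eq_zero fun y hy => ?_
      simp only [List.map_map, List.mem_map, Function.comp] at hy
      obtain ⟨r', hr', rfl⟩ := hy
      have : B ⟨i, r'⟩ ⟨i, r⟩ = 0 := hfib i r' r (fun e => hr (e ▸ hr'))
      simp [LB, Finsupp.linearCombination_single, this]
    rw [map_sub, hzero, sub_zero, List.map_cons, List.sum_cons]
    abel

lemma LB_piBar (a : I → I → ℤ) (B : (Σ i, Fin (n i)) → (Σ i, Fin (n i)) → ℤ)
    (hcover : ∀ (i j : I) (m : Fin (n j)), (∑ r : Fin (n i), B ⟨i, r⟩ ⟨j, m⟩) = a i j)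
    (i : I) (r : Fin (n i)) (h : I →₀ ℤ) :
    LB n B ⟨i, r⟩ (piBar n h) = h.sum fun j c => c * a j i := by
  rw [piBar, map_finsuppSum]
  refine Finsupp.sum_congr fun j _ => ?_
  rw [map_sum]
  have : ∀ m : Fin (n j),
      LB n B ⟨i, r⟩ (Finsupp.single (⟨j, m⟩ : Σ i, Fin (n i)) (h j))
        = h j * B ⟨j, m⟩ ⟨i, r⟩ := by
    intro m
    simp [LB, Finsupp.linearCombination_single, smul_eq_mul]
  rw [Finset.sum_congr rfl fun m _ => this m, ← Finset.mul_sum, hcover j i r]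

lemma equivariance (a : I → I → ℤ) (B : (Σ i, Fin (n i)) → (Σ i, Fin (n i)) → ℤ)
    (hfib : ∀ (i : I) (r r' : Fin (n i)), r ≠ r' → B ⟨i, r⟩ ⟨i, r'⟩ = 0)
    (hcover : ∀ (i j : I) (m : Fin (n j)), (∑ r : Fin (n i), B ⟨i, r⟩ ⟨j, m⟩) = a i j)
    (i : I) (h : I →₀ ℤ) :
    piBar n (sA a i h) = sProd n B i (piBar n h) := by
  classical
  set c : ℤ := h.sum fun j cj => cj * a j i with hc
  rw [sProd, foldr_sB n B hfib i (piBar n h) _ (List.nodup_finRange _)]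
  have h1 : ∀ r : Fin (n i), LB n B ⟨i, r⟩ (piBar n h) = c := fun r =>
    LB_piBar n a B hcover i r h
  simp only [h1]
  rw [← Fin.sum_univ_def fun r : Fin (n i) =>
    Finsupp.single (⟨i, r⟩ : Σ i, Fin (n i)) c]
  ext s
  obtain ⟨j, m⟩ := s
  rw [Finsupp.sub_apply, piBar_apply, piBar_apply, fiber_sum_apply, sA,
    Finsupp.sub_apply]
  simp [Finsupp.single_apply, ← hc, mul_ite]

/-- Let `A = (a_{ij})` be a GCM and `B` a simply laced cover of `A`, with index
set `J = {(i,r) : i ∈ I, r < n_i}`, so that `B` is simply laced, has no edges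
inside a fibre, and `⟨α_{(j,m)}, α_{(i,·)}^∨⟩ = Σ_r B_{(i,r),(j,m)} = a_{ij}`.
Then `π̄ : Q^∨(A) → Q^∨(B)`, `α_i^∨ ↦ α_{(i,·)}^∨`, is injective and satisfies
`π̄(s_i(h)) = s_{(i,·)}(π̄(h))`; consequently, for any word `s_{i_1} ⋯ s_{i_k}`
acting nontrivially on `Q^∨(A)` (e.g. a reduced word, `k ≥ 1`, of a nontrivial
element `w ∈ W(A)`), the element `w^π = s_{(i_1,·)} ⋯ s_{(i_k,·)} ∈ W(B)` is
nontrivial. -/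
theorem stmt15 (hn : ∀ i, 0 < n i)
    (a : I → I → ℤ) (hA : IsGCM a)
    (B : (Σ i, Fin (n i)) → (Σ i, Fin (n i)) → ℤ) (hB : IsGCM B)
    (hsl : ∀ s t, s ≠ t → B s t = 0 ∨ B s t = -1)
    (hfib : ∀ (i : I) (r r' : Fin (n i)), r ≠ r' → B ⟨i, r⟩ ⟨i, r'⟩ = 0)
    (hcover : ∀ (i j : I) (m : Fin (n j)), (∑ r : Fin (n i), B ⟨i, r⟩ ⟨j, m⟩) = a i j) :
    Function.Injective (piBar n) ∧
    (∀ (i : I) (h : I →₀ ℤ), piBar n (sA a i h) = sProd n B i (piBar n h)) ∧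
    (∀ w : List I,
      (∃ h : I →₀ ℤ, w.foldr (fun i x => sA a i x) h ≠ h) →
      ∃ h' : (Σ i, Fin (n i)) →₀ ℤ, w.foldr (fun i x => sProd n B i x) h' ≠ h') := by
  have inj : Function.Injective (piBar n) := by
    intro h1 h2 he
    ext j
    have := congrArg (fun f : (Σ i, Fin (n i)) →₀ ℤ => f ⟨j, ⟨0, hn j⟩⟩) he
    simpa [piBar_apply] using this
  have equ := equivariance n a B hfib hcover
  have comm : ∀ (w : List I) (h : I →₀ ℤ),
      piBar n (w.foldr (fun i x => sA a i x) h)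
        = w.foldr (fun i x => sProd n B i x) (piBar n h) := by
    intro w
    induction w with
    | nil => intro h; rfl
    | cons i w ih => intro h; rw [List.foldr_cons, List.foldr_cons, equ, ih]
  refine ⟨inj, equ, fun w ⟨h, hne⟩ => ⟨piBar n h, fun hcontra => ?_⟩⟩
  exact hne (inj (by rw [comm, hcontra]))

end Stmt15
end

section
/- Let B be a GCM and {β_i : i ∈ I} a linearly independent set of positive real roots of g(B) with β_i − β_j ∉ Δ(B) for all i,j, and let A = (β_j(β_i^∨))_{i,j∈I}. Define π̄ : Q(A) → Q(B) by α_i ↦ β_i. Then π̄(s_i(λ)) = s_{β_i}(π̄(λ)) for all i ∈ I and λ ∈ Q(A), where s_{β}(μ) = μ − ⟨μ, β^∨⟩β is the reflection in the real root β. Consequently, for any nontrivial w ∈ W(A) with reduced decomposition w = s_{i_1}⋯s_{i_k}, the element s_{β_{i_1}}⋯s_{β_{i_k}} ∈ W(B) is nontrivial. -/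
namespace Stmt16

variable {J : Type*} [DecidableEq J]

/-- A generalised Cartan matrix. -/
def IsGCM {I : Type*} (a : I → I → ℤ) : Prop :=
  (∀ i, a i i = 2) ∧ (∀ i j, i ≠ j → a i j ≤ 0) ∧ (∀ i j, a i j = 0 ↔ a j i = 0)

/-- Pairing `⟨α, h⟩` on `Q(B) × Q^∨(B)` with `⟨α_j, α_i^∨⟩ = b_{ij}`. -/
def pairing (b : J → J → ℤ) (α h : J →₀ ℤ) : ℤ :=
  α.sum fun j c => h.sum fun i d => d * c * b i j

/-- Simple reflection on the root lattice of `B`. -/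
noncomputable def sQ (b : J → J → ℤ) (i : J) (α : J →₀ ℤ) : J →₀ ℤ :=
  α - pairing b α (Finsupp.single i 1) • Finsupp.single i 1

/-- Simple reflection on the coroot lattice of `B`. -/
noncomputable def sV (b : J → J → ℤ) (i : J) (h : J →₀ ℤ) : J →₀ ℤ :=
  h - pairing b (Finsupp.single i 1) h • Finsupp.single i 1

/-- Action of a word in the simple reflections on the root lattice. -/
noncomputable def applyQ (b : J → J → ℤ) (l : List J) (α : J →₀ ℤ) : J →₀ ℤ :=
  l.foldr (fun i x => sQ b i x) α

/-- Action of a word in the simple reflections on the coroot lattice. -/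
noncomputable def applyV (b : J → J → ℤ) (l : List J) (h : J →₀ ℤ) : J →₀ ℤ :=
  l.foldr (fun i x => sV b i x) h

/-- The real roots `Δ^re(B) = W(B) · {α_j}`. -/
def realRoots (b : J → J → ℤ) : Set (J →₀ ℤ) :=
  {β | ∃ (l : List J) (m : J), β = applyQ b l (Finsupp.single m 1)}

/-- The Dynkin diagram of `b`. -/
def dynkinGraph (b : J → J → ℤ) : SimpleGraph J :=
  SimpleGraph.fromRel fun i j => b i j ≠ 0

/-- Connected support in the Dynkin diagram. -/
def SuppConnected (b : J → J → ℤ) (α : J →₀ ℤ) : Prop :=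
  ((dynkinGraph b).induce {i : J | α i ≠ 0}).Connected

/-- The fundamental imaginary chamber. -/
def fundChamber (b : J → J → ℤ) : Set (J →₀ ℤ) :=
  {α | (∀ j, 0 ≤ α j) ∧ SuppConnected b α ∧ ∀ i, pairing b α (Finsupp.single i 1) ≤ 0}

/-- The imaginary roots `Δ^im(B) = W(B) · (K ∪ −K)`. -/
def imaginaryRoots (b : J → J → ℤ) : Set (J →₀ ℤ) :=
  {β | ∃ (l : List J) (α : J →₀ ℤ),
    (α ∈ fundChamber b ∨ -α ∈ fundChamber b) ∧ β = applyQ b l α}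

/-- The roots `Δ(B) = Δ^re(B) ∪ Δ^im(B)`. -/
def roots (b : J → J → ℤ) : Set (J →₀ ℤ) :=
  realRoots b ∪ imaginaryRoots b

/-- Reflection in a real root `β` (with coroot `β^∨`):
`s_β(μ) = μ − ⟨μ, β^∨⟩ β`. -/
noncomputable def sBeta (b : J → J → ℤ) (β βv : J →₀ ℤ) (μ : J →₀ ℤ) : J →₀ ℤ :=
  μ - pairing b μ βv • β

/-- Simple reflection on the root lattice `Q(A) = ⊕_{i ∈ I} ℤα_i` of the GCM
`A = (⟨β_j, β_i^∨⟩)`: `s_i(λ) = λ − ⟨λ, α_i^∨⟩ α_i`. -/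
noncomputable def sQA {I : Type*} [DecidableEq I] (A : I → I → ℤ) (i : I) (lam : I →₀ ℤ) :
    I →₀ ℤ :=
  lam - (lam.sum fun j c => c * A i j) • Finsupp.single i 1

/-- The linear map `π̄ : Q(A) → Q(B)`, `α_i ↦ β_i`. -/
noncomputable def piBar {I : Type*} (β : I → (J →₀ ℤ)) (lam : I →₀ ℤ) : J →₀ ℤ :=
  lam.sum fun i c => c • β i
end Stmt16

/-!
Writing `λ = ∑ c_j α_j`, linearity of the pairing gives
`⟨π̄ λ, β_i^∨⟩ = ∑ c_j ⟨β_j, β_i^∨⟩ = ∑ c_j A_{ij} = ⟨λ, α_i^∨⟩`, so `π̄` intertwines `s_i` with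
`s_{β_i}`, and hence any word in the `s_i` with the corresponding word in the `s_{β_i}`.
Since the `β_i` are linearly independent, `π̄` is injective, so a word moving some `λ` moves `π̄ λ`.
-/

namespace Stmt16

section

variable {J I : Type*}

lemma pairing_add_left (b : J → J → ℤ) (α₁ α₂ h : J →₀ ℤ) :
    pairing b (α₁ + α₂) h = pairing b α₁ h + pairing b α₂ h :=
  Finsupp.sum_add_index' (fun _ => by simp) fun _ _ _ => by
    rw [← Finsupp.sum_add]
    exact Finsupp.sum_congr fun _ _ => by ring

def pairingLeft (b : J → J → ℤ) (h : J →₀ ℤ) : (J →₀ ℤ) →+ ℤ where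
  toFun α := pairing b α h
  map_zero' := Finsupp.sum_zero_index
  map_add' α₁ α₂ := pairing_add_left b α₁ α₂ h

lemma piBar_eq_linearCombination (β : I → J →₀ ℤ) :
    piBar β = Finsupp.linearCombination ℤ β :=
  funext fun _ => (Finsupp.linearCombination_apply ℤ _).symm

lemma pairing_piBar (b : J → J → ℤ) (β : I → J →₀ ℤ) (h : J →₀ ℤ) (lam : I →₀ ℤ) :
    pairing b (piBar β lam) h = lam.sum fun i c => c * pairing b (β i) h :=
  (map_finsuppSum (pairingLeft b h) lam _).trans <|
    Finsupp.sum_congr fun i _ => map_zsmul (pairingLeft b h) (lam i) (β i)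

lemma piBar_injective {β : I → J →₀ ℤ} (hβ : LinearIndependent ℤ β) :
    Function.Injective (piBar β) := by
  rw [piBar_eq_linearCombination]
  exact hβ.finsuppLinearCombination_injective

lemma piBar_sQA [DecidableEq I] {b : J → J → ℤ} {β βv : I → J →₀ ℤ} {A : I → I → ℤ}
    (hA : ∀ i i', A i i' = pairing b (β i') (βv i)) (i : I) (lam : I →₀ ℤ) :
    piBar β (sQA A i lam) = sBeta b (β i) (βv i) (piBar β lam) := by
  rw [sQA, sBeta, pairing_piBar, piBar_eq_linearCombination]
  simp [hA]

end

variable {J : Type*} [DecidableEq J]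

theorem stmt16_general {I : Type*} [DecidableEq I]
    (b : J → J → ℤ)
    (β : I → (J →₀ ℤ)) (l : I → List J) (m : I → J)
    (hind : LinearIndependent ℤ β)
    (A : I → I → ℤ)
    (hA : ∀ i i', A i i' = pairing b (β i') (applyV b (l i) (Finsupp.single (m i) 1))) :
    (∀ (i : I) (lam : I →₀ ℤ),
        piBar β (sQA A i lam)
          = sBeta b (β i) (applyV b (l i) (Finsupp.single (m i) 1)) (piBar β lam)) ∧
    (∀ w : List I,
      (∃ lam : I →₀ ℤ, w.foldr (fun i x => sQA A i x) lam ≠ lam) →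
      ∃ μ : J →₀ ℤ,
        w.foldr (fun i x =>
          sBeta b (β i) (applyV b (l i) (Finsupp.single (m i) 1)) x) μ ≠ μ) := by
  refine ⟨piBar_sQA hA, fun w ⟨lam, hmoved⟩ => ⟨piBar β lam, fun hfixed => hmoved ?_⟩⟩
  apply piBar_injective hind
  rwa [List.foldr_hom (piBar β) fun i lam => (piBar_sQA hA i lam).symm] at hfixed

/-- Let `B` be a GCM, `{β_i : i ∈ I}` a linearly independent finite set of
positive real roots of `𝔤(B)` (with `β_i = w_i α_{m_i}` and coroots
`β_i^∨ = w_i α_{m_i}^∨`) such that `β_i − β_j ∉ Δ(B)` for all `i, j`, and let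
`A = (β_j(β_i^∨))_{i,j}`.  Then `π̄ : Q(A) → Q(B)`, `α_i ↦ β_i`, satisfies
`π̄(s_i(λ)) = s_{β_i}(π̄(λ))` for all `i, λ`; consequently, for any word
`s_{i_1} ⋯ s_{i_k}` acting nontrivially on `Q(A)` (e.g. a reduced decomposition
of a nontrivial element of `W(A)`), the element `s_{β_{i_1}} ⋯ s_{β_{i_k}}` of
`W(B)` is nontrivial. -/
theorem stmt16 {I : Type*} [Fintype I] [DecidableEq I]
    (b : J → J → ℤ) (hB : IsGCM b)
    (β : I → (J →₀ ℤ)) (l : I → List J) (m : I → J)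
    (hreal : ∀ i, β i = applyQ b (l i) (Finsupp.single (m i) 1))
    (hpos : ∀ i, ∀ j, 0 ≤ β i j)
    (hind : LinearIndependent ℤ β)
    (hdiff : ∀ i i' : I, β i - β i' ∉ roots b)
    (A : I → I → ℤ)
    (hA : ∀ i i', A i i' = pairing b (β i') (applyV b (l i) (Finsupp.single (m i) 1))) :
    (∀ (i : I) (lam : I →₀ ℤ),
        piBar β (sQA A i lam)
          = sBeta b (β i) (applyV b (l i) (Finsupp.single (m i) 1)) (piBar β lam)) ∧
    (∀ w : List I,
      (∃ lam : I →₀ ℤ, w.foldr (fun i x => sQA A i x) lam ≠ lam) →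
      ∃ μ : J →₀ ℤ,
        w.foldr (fun i x =>
          sBeta b (β i) (applyV b (l i) (Finsupp.single (m i) 1)) x) μ ≠ μ) :=
  stmt16_general b β l m hind A hA

end Stmt16
end
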